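/- For every integer l ≥ 0 there exists a unique family (φ_α), indexed by the multi-indices α ∈ ℕ² with |α| ≤ l, of polynomial functions ℝ² → ℝ with deg φ_α ≤ |α|, such that (1/|K|) ∫_K D^γ φ_α dx = δ_{αγ} for all multi-indices α, γ with |α| ≤ l and |γ| ≤ l. -/

import Mathlib

/-!
For a polynomial `p` of total degree `≤ m`, the moments `⨍_K D^γ p`, `|γ| ≤ m`, depend linearly
on `p`, and there are as many of them as monomials of degree `≤ m`. The moment map is injective:
if all moments of `p` vanish, then so do those of `∂₁p` and `∂₂p`, so by induction on `m` both
partial derivatives vanish, `p` is a constant, and that constant is its own average. Hence the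
moment map is bijective, and `φ_α` is the preimage of `δ_α` in degree `m = |α|`; the conditions
with `|γ| > |α|` hold automatically because `D^γ` kills polynomials of degree `< |γ|`.
-/

noncomputable section
open MeasureTheory

namespace PaperStmt

/-- First partial derivative `∂/∂x₁`. -/
def pd1 (f : ℝ × ℝ → ℝ) : ℝ × ℝ → ℝ := fun x => fderiv ℝ f x (1, 0)

/-- Second partial derivative `∂/∂x₂`. -/
def pd2 (f : ℝ × ℝ → ℝ) : ℝ × ℝ → ℝ := fun x => fderiv ℝ f x (0, 1)

/-- Multi-index derivative `D^α = ∂^{|α|}/∂x₁^{α₁}∂x₂^{α₂}`. -/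
def Dmulti (α : ℕ × ℕ) (f : ℝ × ℝ → ℝ) : ℝ × ℝ → ℝ := (pd1)^[α.1] ((pd2)^[α.2] f)

/-- `f : ℝ² → ℝ` is a polynomial function of (total) degree at most `l`. -/
def IsPolyFun (l : ℕ) (f : ℝ × ℝ → ℝ) : Prop :=
  ∃ q : MvPolynomial (Fin 2) ℝ, q.totalDegree ≤ l ∧
    ∀ x : ℝ × ℝ, f x = MvPolynomial.eval ![x.1, x.2] q

end PaperStmt

namespace MvPolynomial

variable {σ R : Type*}

theorem pderiv_pderiv_comm [CommRing R] (i j : σ) (p : MvPolynomial σ R) :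
    pderiv i (pderiv j p) = pderiv j (pderiv i p) := by
  classical
  -- the commutator of two derivations is a derivation, and this one vanishes on every `X k`
  have hbracket : ⁅pderiv i, pderiv j⁆ = (0 : Derivation R (MvPolynomial σ R) _) :=
    derivation_ext fun k => by
      rw [Derivation.commutator_apply, pderiv_X, pderiv_X]
      simp [Pi.single_apply, apply_ite]
  have h := congr($hbracket p)
  rwa [Derivation.commutator_apply, Derivation.zero_apply, sub_eq_zero] at h

theorem totalDegree_pderiv_le [CommSemiring R] (i : σ) (p : MvPolynomial σ R) :
    (pderiv i p).totalDegree ≤ p.totalDegree - 1 := by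
  refine Finset.sup_le fun d hd => ?_
  rw [mem_support_iff, coeff_pderiv] at hd
  have hdeg := le_totalDegree (mem_support_iff.mpr (left_ne_zero_of_mul hd))
  rw [Finsupp.sum_add_index' (fun _ => rfl) (fun _ _ _ => rfl),
    Finsupp.sum_single_index rfl] at hdeg
  omega

theorem eq_C_of_forall_pderiv_eq_zero [CommRing R] [IsAddTorsionFree R] {p : MvPolynomial σ R}
    (h : ∀ i, pderiv i p = 0) : p = C (coeff 0 p) := by
  refine coe_injective σ R (MvPowerSeries.pderiv.ext (fun i => ?_) ?_)
  · rw [MvPowerSeries.pderiv_coe, MvPowerSeries.pderiv_coe, h, pderiv_C]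
  · rw [← MvPowerSeries.coeff_zero_eq_constantCoeff_apply, coeff_coe, coe_C,
      MvPowerSeries.constantCoeff_C]

theorem totalDegree_iterate_pderiv_le [CommSemiring R] (i : σ) (n : ℕ) (p : MvPolynomial σ R) :
    ((pderiv i)^[n] p).totalDegree ≤ p.totalDegree - n := by
  induction n with
  | zero => simp
  | succ n ih =>
    rw [Function.iterate_succ_apply']
    exact (totalDegree_pderiv_le i _).trans (by omega)

theorem iterate_pderiv_eq_zero_of_totalDegree_lt [CommSemiring R] (i : σ) {n : ℕ}
    {p : MvPolynomial σ R} (h : p.totalDegree < n) : (pderiv i)^[n] p = 0 := by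
  obtain ⟨k, rfl⟩ : ∃ k, n = k + 1 := ⟨n - 1, by omega⟩
  have hconst : ((pderiv i)^[k] p).totalDegree = 0 := by
    have := totalDegree_iterate_pderiv_le i k p
    omega
  rw [Function.iterate_succ_apply', totalDegree_eq_zero_iff_eq_C.mp hconst, pderiv_C]

theorem hasFDerivAt_eval {𝕜 : Type*} [NontriviallyNormedField 𝕜] [Fintype σ]
    (p : MvPolynomial σ 𝕜) (x : σ → 𝕜) :
    HasFDerivAt (fun y => eval y p)
      (∑ i, eval x (pderiv i p) • ContinuousLinearMap.proj i : (σ → 𝕜) →L[𝕜] 𝕜) x := by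
  classical
  induction p using MvPolynomial.induction_on with
  | C a =>
    simp only [eval_C]
    exact (hasFDerivAt_const a x).congr_fderiv (by ext; simp)
  | add p q hp hq =>
    simp only [map_add]
    exact (hp.add hq).congr_fderiv (by ext; simp [add_mul, Finset.sum_add_distrib])
  | mul_X p j hp =>
    simp only [map_mul, eval_X]
    refine (hp.mul (hasFDerivAt_apply j x)).congr_fderiv ?_
    ext v
    simp [pderiv_X, Pi.single_apply, apply_ite (eval x), add_mul, Finset.sum_add_distrib,
      Finset.mul_sum, mul_assoc]

section IteratedPDeriv

variable [CommRing R]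

def iteratedPDeriv (γ : ℕ × ℕ) : Module.End R (MvPolynomial (Fin 2) R) :=
  (pderiv 0).toLinearMap ^ γ.1 * (pderiv 1).toLinearMap ^ γ.2

theorem iteratedPDeriv_apply (γ : ℕ × ℕ) (p : MvPolynomial (Fin 2) R) :
    iteratedPDeriv γ p = (pderiv 0)^[γ.1] ((pderiv 1)^[γ.2] p) := by
  simp [iteratedPDeriv, Module.End.pow_apply]

@[simp]
theorem iteratedPDeriv_zero :
    iteratedPDeriv (0, 0) = (1 : Module.End R (MvPolynomial (Fin 2) R)) := by
  simp [iteratedPDeriv]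

theorem iteratedPDeriv_pderiv_zero (γ : ℕ × ℕ) (p : MvPolynomial (Fin 2) R) :
    iteratedPDeriv γ (pderiv 0 p) = iteratedPDeriv (γ.1 + 1, γ.2) p := by
  have hcomm : Commute ((pderiv 1).toLinearMap : Module.End R (MvPolynomial (Fin 2) R))
      (pderiv 0).toLinearMap :=
    LinearMap.ext fun q => pderiv_pderiv_comm 1 0 q
  rw [iteratedPDeriv, iteratedPDeriv, ← Derivation.coeFn_coe, ← Module.End.mul_apply, mul_assoc,
    (hcomm.pow_left γ.2).eq, ← mul_assoc, ← pow_succ]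

theorem iteratedPDeriv_pderiv_one (γ : ℕ × ℕ) (p : MvPolynomial (Fin 2) R) :
    iteratedPDeriv γ (pderiv 1 p) = iteratedPDeriv (γ.1, γ.2 + 1) p := by
  rw [iteratedPDeriv, iteratedPDeriv, ← Derivation.coeFn_coe, ← Module.End.mul_apply, mul_assoc,
    ← pow_succ]

theorem iteratedPDeriv_eq_zero_of_totalDegree_lt {γ : ℕ × ℕ} {p : MvPolynomial (Fin 2) R}
    (h : p.totalDegree < γ.1 + γ.2) : iteratedPDeriv γ p = 0 := by
  rw [iteratedPDeriv_apply]
  by_cases h₂ : p.totalDegree < γ.2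
  · rw [iterate_pderiv_eq_zero_of_totalDegree_lt 1 h₂, iterate_map_zero]
  · refine iterate_pderiv_eq_zero_of_totalDegree_lt 0 ?_
    have := totalDegree_iterate_pderiv_le 1 γ.2 p
    omega

theorem forall_map_iteratedPDeriv_eq_iff {M : Type*} [AddCommGroup M] [Module R M]
    (L : MvPolynomial (Fin 2) R →ₗ[R] M) {m l : ℕ} (hml : m ≤ l) {p : MvPolynomial (Fin 2) R}
    (hp : p.totalDegree ≤ m) {c : ℕ × ℕ → M} (hc : ∀ γ : ℕ × ℕ, m < γ.1 + γ.2 → c γ = 0) :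
    (∀ γ : ℕ × ℕ, γ.1 + γ.2 ≤ l → L (iteratedPDeriv γ p) = c γ) ↔
      ∀ γ : {γ : ℕ × ℕ // γ.1 + γ.2 ≤ m}, L (iteratedPDeriv γ.1 p) = c γ.1 := by
  refine ⟨fun h γ => h γ.1 (γ.2.trans hml), fun h γ _ => ?_⟩
  by_cases hγ : γ.1 + γ.2 ≤ m
  · exact h ⟨γ, hγ⟩
  · rw [iteratedPDeriv_eq_zero_of_totalDegree_lt (by omega), map_zero, hc γ (by omega)]

end IteratedPDeriv

instance finite_multiIndex_le (m : ℕ) : Finite {γ : ℕ × ℕ // γ.1 + γ.2 ≤ m} :=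
  ((Set.finite_Iic (m, m)).subset fun γ (h : γ.1 + γ.2 ≤ m) =>
    Prod.mk_le_mk.mpr ⟨by omega, by omega⟩).to_subtype

theorem finrank_restrictTotalDegree_fin_two [CommRing R] [StrongRankCondition R] (m : ℕ) :
    Module.finrank R (restrictTotalDegree (Fin 2) R m) =
      Nat.card {γ : ℕ × ℕ // γ.1 + γ.2 ≤ m} := by
  rw [restrictTotalDegree, Module.finrank_eq_nat_card_basis (basisRestrictSupport R _)]
  exact Nat.card_congr <| (finTwoArrowEquiv' ℕ).subtypeEquiv fun d => by
    rw [← finTwoArrowEquiv'_sum_eq, Equiv.symm_apply_apply]; rfl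

section Moments

variable [Field R] [CharZero R] (L : MvPolynomial (Fin 2) R →ₗ[R] R)

theorem eq_zero_of_map_iteratedPDeriv_eq_zero (hL : L 1 ≠ 0) {m : ℕ}
    {p : MvPolynomial (Fin 2) R} (hp : p.totalDegree ≤ m)
    (h : ∀ γ : ℕ × ℕ, γ.1 + γ.2 ≤ m → L (iteratedPDeriv γ p) = 0) : p = 0 := by
  have of_pderiv_eq_zero : ∀ q : MvPolynomial (Fin 2) R,
      (∀ i, pderiv i q = 0) → L (iteratedPDeriv (0, 0) q) = 0 → q = 0 := by
    intro q hq hLq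
    rw [iteratedPDeriv_zero, Module.End.one_apply, eq_C_of_forall_pderiv_eq_zero hq,
      C_eq_smul_one, map_smul, smul_eq_mul] at hLq
    rw [eq_C_of_forall_pderiv_eq_zero hq, (mul_eq_zero.mp hLq).resolve_right hL, C_0]
  induction m generalizing p with
  | zero =>
    exact of_pderiv_eq_zero p
      (fun i => iterate_pderiv_eq_zero_of_totalDegree_lt (n := 1) i (by omega)) (h _ le_rfl)
  | succ m ih =>
    refine of_pderiv_eq_zero p (fun i => ih ((totalDegree_pderiv_le i p).trans (by omega))
      fun γ hγ => ?_) (h _ (Nat.zero_le _))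
    fin_cases i
    · simpa [iteratedPDeriv_pderiv_zero] using h (γ.1 + 1, γ.2) (by omega)
    · simpa [iteratedPDeriv_pderiv_one] using h (γ.1, γ.2 + 1) (by omega)

def momentMap (m : ℕ) :
    restrictTotalDegree (Fin 2) R m →ₗ[R] ({γ : ℕ × ℕ // γ.1 + γ.2 ≤ m} → R) :=
  LinearMap.pi fun γ => L ∘ₗ iteratedPDeriv γ.1 ∘ₗ (restrictTotalDegree (Fin 2) R m).subtype

theorem momentMap_bijective (hL : L 1 ≠ 0) (m : ℕ) : Function.Bijective (momentMap L m) := by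
  have hinj : Function.Injective (momentMap L m) := by
    refine (injective_iff_map_eq_zero _).mpr fun p hp => Subtype.ext ?_
    exact eq_zero_of_map_iteratedPDeriv_eq_zero L hL ((mem_restrictTotalDegree _ _ _).mp p.2)
      fun γ hγ => congr_fun hp ⟨γ, hγ⟩
  refine ⟨hinj, (LinearMap.injective_iff_surjective_of_finrank_eq_finrank ?_).mp hinj⟩
  have := Fintype.ofFinite {γ : ℕ × ℕ // γ.1 + γ.2 ≤ m}
  rw [finrank_restrictTotalDegree_fin_two, Module.finrank_pi, Nat.card_eq_fintype_card]

theorem existsUnique_totalDegree_le_moments (hL : L 1 ≠ 0) (m : ℕ)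
    (c : {γ : ℕ × ℕ // γ.1 + γ.2 ≤ m} → R) :
    ∃! p : MvPolynomial (Fin 2) R, p.totalDegree ≤ m ∧
      ∀ γ : {γ : ℕ × ℕ // γ.1 + γ.2 ≤ m}, L (iteratedPDeriv γ.1 p) = c γ := by
  obtain ⟨p, hp⟩ := (momentMap_bijective L hL m).2 c
  refine ⟨p, ⟨(mem_restrictTotalDegree _ _ _).mp p.2, congr_fun hp⟩, fun q ⟨hq, hqc⟩ => ?_⟩
  let q' : restrictTotalDegree (Fin 2) R m := ⟨q, (mem_restrictTotalDegree _ _ _).mpr hq⟩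
  have hpq : p = q' := (momentMap_bijective L hL m).1 (hp.trans (_root_.funext hqc).symm)
  exact congr_arg Subtype.val hpq.symm

end Moments

end MvPolynomial

namespace PaperStmt

open MvPolynomial

def polyFun (p : MvPolynomial (Fin 2) ℝ) : ℝ × ℝ → ℝ := fun x => eval ![x.1, x.2] p

theorem fderiv_polyFun_apply (p : MvPolynomial (Fin 2) ℝ) (x v : ℝ × ℝ) :
    fderiv ℝ (polyFun p) x v = polyFun (pderiv 0 p) x * v.1 + polyFun (pderiv 1 p) x * v.2 := by
  let e := ContinuousLinearEquiv.finTwoArrow ℝ ℝ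
  rw [show polyFun p = (fun y => eval y p) ∘ e.symm from rfl,
    ((hasFDerivAt_eval p _).comp x e.symm.hasFDerivAt).fderiv]
  simp [e, Fin.sum_univ_two, polyFun]

theorem pd1_polyFun (p : MvPolynomial (Fin 2) ℝ) : pd1 (polyFun p) = polyFun (pderiv 0 p) := by
  ext x
  simp [pd1, fderiv_polyFun_apply]

theorem pd2_polyFun (p : MvPolynomial (Fin 2) ℝ) : pd2 (polyFun p) = polyFun (pderiv 1 p) := by
  ext x
  simp [pd2, fderiv_polyFun_apply]

theorem Dmulti_polyFun (γ : ℕ × ℕ) (p : MvPolynomial (Fin 2) ℝ) :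
    Dmulti γ (polyFun p) = polyFun (iteratedPDeriv γ p) := by
  have h₁ : Function.Semiconj polyFun (pderiv 0) pd1 := fun q => (pd1_polyFun q).symm
  have h₂ : Function.Semiconj polyFun (pderiv 1) pd2 := fun q => (pd2_polyFun q).symm
  rw [Dmulti, iteratedPDeriv_apply, ← (h₂.iterate_right γ.2).eq, ← (h₁.iterate_right γ.1).eq]

section Average

variable {K : Set (ℝ × ℝ)}

theorem integrableOn_polyFun (hK : Bornology.IsBounded K) (p : MvPolynomial (Fin 2) ℝ) :
    IntegrableOn (polyFun p) K :=
  ((continuous_eval p).comp (ContinuousLinearEquiv.finTwoArrow ℝ ℝ).symm.continuous).continuousOn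
    |>.integrableOn_compact hK.isCompact_closure |>.mono_set subset_closure

def averageOn (hK : Bornology.IsBounded K) : MvPolynomial (Fin 2) ℝ →ₗ[ℝ] ℝ where
  toFun p := (volume K).toReal⁻¹ * ∫ x in K, polyFun p x
  map_add' p q := by
    rw [← mul_add, ← integral_add (integrableOn_polyFun hK p) (integrableOn_polyFun hK q)]
    simp [polyFun]
  map_smul' c p := by
    simp [polyFun, integral_const_mul, mul_left_comm]

theorem averageOn_one (hK : Bornology.IsBounded K) (hK0 : 0 < volume K) : averageOn hK 1 = 1 := by
  have hvol : (volume K).toReal ≠ 0 :=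
    ENNReal.toReal_ne_zero.mpr ⟨hK0.ne', hK.measure_lt_top.ne⟩
  simp [averageOn, polyFun, measureReal_def, hvol]

theorem forall_average_Dmulti_polyFun_eq_iff (hK : Bornology.IsBounded K) {l : ℕ} {α : ℕ × ℕ}
    (hα : α.1 + α.2 ≤ l) {p : MvPolynomial (Fin 2) ℝ} (hp : p.totalDegree ≤ α.1 + α.2) :
    (∀ γ : ℕ × ℕ, γ.1 + γ.2 ≤ l →
        (volume K).toReal⁻¹ * ∫ x in K, Dmulti γ (polyFun p) x = if α = γ then 1 else 0) ↔
      ∀ γ : {γ : ℕ × ℕ // γ.1 + γ.2 ≤ α.1 + α.2},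
        averageOn hK (iteratedPDeriv γ.1 p) = if α = γ.1 then 1 else 0 := by
  simp only [Dmulti_polyFun]
  exact forall_map_iteratedPDeriv_eq_iff (averageOn hK) hα hp
    fun γ hγ => if_neg (by rintro rfl; omega)

end Average

end PaperStmt

open PaperStmt in
theorem exists_unique_dual_basis
    (K : Set (ℝ × ℝ)) (hKb : Bornology.IsBounded K)
    (hK0 : 0 < volume K) (l : ℕ) :
    ∃! φ : {α : ℕ × ℕ // α.1 + α.2 ≤ l} → ℝ × ℝ → ℝ,
      (∀ a : {α : ℕ × ℕ // α.1 + α.2 ≤ l}, IsPolyFun (a.1.1 + a.1.2) (φ a)) ∧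
      (∀ a : {α : ℕ × ℕ // α.1 + α.2 ≤ l}, ∀ γ : ℕ × ℕ, γ.1 + γ.2 ≤ l →
        (volume K).toReal⁻¹ * ∫ x in K, Dmulti γ (φ a) x =
          if a.1 = γ then 1 else 0) := by
  have hL : averageOn hKb 1 ≠ 0 := by rw [averageOn_one hKb hK0]; exact one_ne_zero
  choose p hp hp_unique using fun a : {α : ℕ × ℕ // α.1 + α.2 ≤ l} =>
    MvPolynomial.existsUnique_totalDegree_le_moments (averageOn hKb) hL (a.1.1 + a.1.2)
      fun γ => if a.1 = γ.1 then 1 else 0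
  refine ⟨fun a => polyFun (p a), ⟨fun a => ⟨p a, (hp a).1, fun _ => rfl⟩, fun a => ?_⟩, ?_⟩
  · exact (forall_average_Dmulti_polyFun_eq_iff hKb a.2 (hp a).1).mpr (hp a).2
  rintro ψ ⟨hψ_poly, hψ⟩
  funext a
  obtain ⟨q, hq, hψq⟩ := hψ_poly a
  have hψa : ψ a = polyFun q := funext hψq
  rw [hψa, hp_unique a q ⟨hq, (forall_average_Dmulti_polyFun_eq_iff hKb a.2 hq).mp (hψa ▸ hψ a)⟩]
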